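/- For r ≥ 2, min_j { q_j + ∑ᵢ ‖(qᵢρᵢ − q_jρ_j)⁺‖₁ } ≤ (1/r)·(1 + ∑_{1≤i<j≤r} ‖qᵢρᵢ − q_jρ_j‖₁); i.e., the Qiu–Li style upper bound Q₄ is always at most the new upper bound Q_new. -/

import Mathlib

open scoped ComplexOrder

/-- The operator absolute value `√(AᴴA)` of a matrix. -/
noncomputable def matAbs {n : ℕ} (A : Matrix (Fin n) (Fin n) ℂ) : Matrix (Fin n) (Fin n) ℂ :=
  (Matrix.posSemidef_conjTranspose_mul_self A).1.eigenvectorUnitary.1 *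
    Matrix.diagonal ((↑) ∘ (Real.sqrt ·) ∘ (Matrix.posSemidef_conjTranspose_mul_self A).1.eigenvalues) *
    (star (Matrix.posSemidef_conjTranspose_mul_self A).1.eigenvectorUnitary : Matrix (Fin n) (Fin n) ℂ)

/-- The trace norm `‖A‖₁ = tr √(AᴴA)`. -/
noncomputable def traceNorm {n : ℕ} (A : Matrix (Fin n) (Fin n) ℂ) : ℝ :=
  ((matAbs A).trace).re

/-- The positive part `A⁺ = (|A| + A)/2` of a self-adjoint matrix `A`, so that
`A = A⁺ - A⁻` with `A⁺, A⁻ ≥ 0`. -/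
noncomputable def matPosPart {n : ℕ} (A : Matrix (Fin n) (Fin n) ℂ) : Matrix (Fin n) (Fin n) ℂ :=
  (2 : ℂ)⁻¹ • (matAbs A + A)

/-- A density operator: positive semidefinite with unit trace. -/
def IsDensity {n : ℕ} (ρ : Matrix (Fin n) (Fin n) ℂ) : Prop :=
  ρ.PosSemidef ∧ ρ.trace = 1

/-- A POVM with `r` outcomes: positive semidefinite effects summing to the identity. -/
def IsPOVM {n r : ℕ} (M : Fin r → Matrix (Fin n) (Fin n) ℂ) : Prop :=
  (∀ i, (M i).PosSemidef) ∧ ∑ i, M i = 1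

/-- Success probability `∑ i, q i * tr (ρ i * M i)` of a measurement. -/
noncomputable def successProb {n r : ℕ} (q : Fin r → ℝ)
    (ρ M : Fin r → Matrix (Fin n) (Fin n) ℂ) : ℝ :=
  ∑ i, q i * ((ρ i * M i).trace).re

/-- Optimal success probability under minimum-error discrimination. -/
noncomputable def optSuccess {n r : ℕ} (q : Fin r → ℝ)
    (ρ : Fin r → Matrix (Fin n) (Fin n) ℂ) : ℝ :=
  sSup {p | ∃ M, IsPOVM M ∧ p = successProb q ρ M}

/-!
For Hermitian `X` the positive parts of `X` and `-X` are positive semidefinite and add up to `|X|`,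
so `‖X⁺‖₁ + ‖(-X)⁺‖₁ = ‖X‖₁`. Summing `q j + ∑ i, ‖(q i ρ i - q j ρ j)⁺‖₁` over `j` therefore gives
`1 + ∑_{i<j} ‖q i ρ i - q j ρ j‖₁`, and the minimum over `j` is at most the average.
-/

open scoped MatrixOrder BigOperators NNRat

theorem Finset.sum_sum_eq_sum_lt_add_swap {ι M : Type*} [Fintype ι] [LinearOrder ι]
    [AddCommMonoid M] (f : ι → ι → M) (hf : ∀ i, f i i = 0) :
    ∑ i, ∑ j, f i j = ∑ p ∈ univ.filter (fun p : ι × ι => p.1 < p.2), (f p.1 p.2 + f p.2 p.1) := by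
  have split : ∀ i j, f i j = (if i < j then f i j else 0) + (if j < i then f i j else 0) := by
    intro i j
    rcases lt_trichotomy i j with h | rfl | h
    · simp [h, h.not_gt]
    · simp [hf]
    · simp [h, h.not_gt]
  rw [Finset.sum_filter, Fintype.sum_prod_type]
  conv_lhs => enter [2, i, 2, j]; rw [split i j]
  simp only [Finset.sum_add_distrib, ite_add_zero]
  rw [Finset.sum_comm (f := fun i j => if j < i then f i j else 0)]

lemma Finset.inf'_le_expect {ι α : Type*} [AddCommMonoid α] [LinearOrder α]
    [IsOrderedAddMonoid α] [Module ℚ≥0 α] [PosSMulMono ℚ≥0 α] {s : Finset ι} (hs : s.Nonempty)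
    (f : ι → α) : s.inf' hs f ≤ 𝔼 i ∈ s, f i :=
  Finset.le_expect hs fun _ hi => Finset.inf'_le f hi

namespace Matrix

variable {n : ℕ}

lemma matAbs_eq_cfcAbs (A : Matrix (Fin n) (Fin n) ℂ) : matAbs A = CFC.abs A := by
  have hAA := posSemidef_conjTranspose_mul_self A
  rw [CFC.abs, star_eq_conjTranspose, CFC.sqrt_eq_real_sqrt _ hAA.nonneg, cfcₙ_eq_cfc,
    hAA.1.cfc_eq]
  simp [IsHermitian.cfc, matAbs, Unitary.conjStarAlgAut_apply, Function.comp_def,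
    star_eq_conjTranspose]

lemma matPosPart_eq_posPart {A : Matrix (Fin n) (Fin n) ℂ} (hA : A.IsHermitian) :
    matPosPart A = A⁺ := by
  rw [matPosPart, matAbs_eq_cfcAbs, CFC.abs_add_self A hA.isSelfAdjoint,
    ← Nat.cast_smul_eq_nsmul ℂ, smul_smul]
  norm_num

lemma traceNorm_of_nonneg {A : Matrix (Fin n) (Fin n) ℂ} (hA : 0 ≤ A) :
    traceNorm A = A.trace.re := by
  rw [traceNorm, matAbs_eq_cfcAbs, CFC.abs_of_nonneg A hA]

lemma traceNorm_matPosPart_add_matPosPart_neg {A : Matrix (Fin n) (Fin n) ℂ}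
    (hA : A.IsHermitian) :
    traceNorm (matPosPart A) + traceNorm (matPosPart (-A)) = traceNorm A := by
  rw [matPosPart_eq_posPart hA, matPosPart_eq_posPart hA.neg, CFC.posPart_neg,
    traceNorm_of_nonneg (CFC.posPart_nonneg A), traceNorm_of_nonneg (CFC.negPart_nonneg A),
    ← Complex.add_re, ← trace_add, CFC.posPart_add_negPart A hA.isSelfAdjoint, traceNorm,
    matAbs_eq_cfcAbs]

lemma traceNorm_matPosPart_zero : traceNorm (matPosPart (0 : Matrix (Fin n) (Fin n) ℂ)) = 0 := by
  rw [matPosPart_eq_posPart isHermitian_zero, CFC.posPart_zero, traceNorm_of_nonneg le_rfl]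
  simp

end Matrix

lemma IsDensity.isHermitian_smul_sub_smul {n : ℕ} {ρ σ : Matrix (Fin n) (Fin n) ℂ}
    (hρ : IsDensity ρ) (hσ : IsDensity σ) (a b : ℝ) :
    ((a : ℂ) • ρ - (b : ℂ) • σ).IsHermitian :=
  (hρ.1.1.smul (Complex.conj_ofReal a)).sub (hσ.1.1.smul (Complex.conj_ofReal b))

theorem stmt14 {n r : ℕ} (hr : 2 ≤ r) (ρ : Fin r → Matrix (Fin n) (Fin n) ℂ)
    (q : Fin r → ℝ) (hρ : ∀ i, IsDensity (ρ i))
    (hq1 : ∑ i, q i = 1) :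
    Finset.univ.inf' (Finset.univ_nonempty_iff.mpr ⟨⟨0, by omega⟩⟩)
        (fun j => q j + ∑ i, traceNorm (matPosPart ((q i : ℂ) • ρ i - (q j : ℂ) • ρ j)))
      ≤ (1 / (r : ℝ)) * (1 +
          ∑ p ∈ Finset.univ.filter (fun p : Fin r × Fin r => p.1 < p.2),
            traceNorm ((q p.1 : ℂ) • ρ p.1 - (q p.2 : ℂ) • ρ p.2)) := by
  set g : Fin r → Fin r → ℝ :=
    fun i j => traceNorm (matPosPart ((q i : ℂ) • ρ i - (q j : ℂ) • ρ j))
  have hpair : ∑ j, ∑ i, g i j = ∑ p ∈ Finset.univ.filter (fun p : Fin r × Fin r => p.1 < p.2),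
      traceNorm ((q p.1 : ℂ) • ρ p.1 - (q p.2 : ℂ) • ρ p.2) := by
    rw [Finset.sum_comm, Finset.sum_sum_eq_sum_lt_add_swap g
      (fun i => by simp only [g, sub_self, Matrix.traceNorm_matPosPart_zero])]
    refine Finset.sum_congr rfl fun p _ => ?_
    rw [← Matrix.traceNorm_matPosPart_add_matPosPart_neg
      ((hρ p.1).isHermitian_smul_sub_smul (hρ p.2) _ _), neg_sub]
  refine (Finset.inf'_le_expect _ _).trans_eq ?_
  rw [Finset.expect_eq_sum_div_card, Finset.sum_add_distrib, hq1, hpair, Finset.card_univ,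
    Fintype.card_fin, one_div_mul_eq_div]
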